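/- Let U_1,…,U_d be pairwise commuting unitary n×n complex matrices and let P be an orthogonal projection on ℂ^n with ‖[P, U_i]‖ ≤ ε for all i. Then there exist pairwise commuting unitary matrices V_1,…,V_d on ℂ^n ⊕ ℂ^n such that each V_i commutes with the projection P ⊕ (I − P) and ‖V_i − (U_i ⊕ U_i)‖ ≤ 4ε for all i. -/

import Mathlib

open scoped Matrix

/-- The `ℓ²` operator norm of a complex matrix. -/
noncomputable def opNorm {ι : Type*} [Fintype ι] [DecidableEq ι]
    (A : Matrix ι ι ℂ) : ℝ :=
  ‖Matrix.toEuclideanCLM (𝕜 := ℂ) A‖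

/-!
With `W = [[P, 1 - P], [1 - P, P]]`, a self-adjoint unitary (as `P` is an orthogonal projection),
one has `W (1 ⊕ 0) W = P ⊕ (1 - P)`. So conjugating the commuting unitaries `U_i ⊕ U_i`, which
commute with `1 ⊕ 0`, by `W` gives commuting unitaries `V_i` that commute with `P ⊕ (1 - P)`.
Moreover `V_i - U_i ⊕ U_i = W [U_i ⊕ U_i, W]` and `[U_i ⊕ U_i, W] = J [U_i, P] Jᴴ` for the
column `J = (1; -1)`, whose norm is `√2`; hence `‖V_i - U_i ⊕ U_i‖ ≤ 2 ‖[P, U_i]‖ ≤ 2ε`.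
-/

theorem Commute.conj_of_mul_self_eq_one {M : Type*} [Monoid M] {w a b : M} (hw : w * w = 1)
    (h : Commute a b) : Commute (w * a * w) (w * b * w) := by
  have hconj (x y : M) : w * x * w * (w * y * w) = w * (x * y) * w :=
    calc w * x * w * (w * y * w) = w * x * (w * w) * y * w := by simp only [mul_assoc]
      _ = w * (x * y) * w := by rw [hw, mul_one, mul_assoc w]
  rw [Commute, SemiconjBy, hconj, hconj, h.eq]

namespace Matrix

variable {m R : Type*}

section Ring

variable [Ring R]

theorem commute_fromBlocks_diagonal [Fintype m] {A B A' B' : Matrix m m R} (hA : Commute A A')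
    (hB : Commute B B') : Commute (fromBlocks A 0 0 B) (fromBlocks A' 0 0 B') := by
  simp only [Commute, SemiconjBy, fromBlocks_multiply, mul_zero, zero_mul, add_zero, zero_add,
    hA.eq, hB.eq]

variable [DecidableEq m]

def projSwap (P : Matrix m m R) : Matrix (m ⊕ m) (m ⊕ m) R :=
  fromBlocks P (1 - P) (1 - P) P

variable [Fintype m] {P : Matrix m m R}

theorem projSwap_mul_self (hP : IsIdempotentElem P) : projSwap P * projSwap P = 1 := by
  rw [projSwap, fromBlocks_multiply, hP.mul_one_sub_self, hP.one_sub_mul_self, hP.eq,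
    hP.one_sub.eq, ← fromBlocks_one]
  simp

theorem projSwap_mul_fromBlocks_one_zero_mul_projSwap (hP : IsIdempotentElem P) :
    projSwap P * fromBlocks 1 0 0 0 * projSwap P = fromBlocks P 0 0 (1 - P) := by
  simp [projSwap, fromBlocks_multiply, hP.mul_one_sub_self, hP.one_sub_mul_self, hP.eq,
    hP.one_sub.eq]

theorem fromBlocks_mul_projSwap_sub_projSwap_mul_fromBlocks (U : Matrix m m R) :
    fromBlocks U 0 0 U * projSwap P - projSwap P * fromBlocks U 0 0 U
      = fromRows (1 : Matrix m m R) (-1) * (U * P - P * U) * fromCols (1 : Matrix m m R) (-1) := by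
  rw [fromRows_mul, fromRows_mul_fromCols, projSwap, fromBlocks_multiply, fromBlocks_multiply,
    sub_eq_add_neg, fromBlocks_neg, fromBlocks_add]
  congr 1 <;> noncomm_ring

end Ring

section Star

variable [Fintype m] [DecidableEq m] [CommRing R] [StarRing R]

theorem projSwap_mem_unitaryGroup {P : Matrix m m R} (hP : IsStarProjection P) :
    projSwap P ∈ unitaryGroup (m ⊕ m) R := by
  have hstar : star (projSwap P) = projSwap P := by
    simp [projSwap, star_eq_conjTranspose, fromBlocks_conjTranspose,
      show Pᴴ = P from hP.isSelfAdjoint]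
  rw [mem_unitaryGroup_iff, hstar, projSwap_mul_self hP.isIdempotentElem]

theorem fromBlocks_mem_unitaryGroup {A B : Matrix m m R} (hA : A ∈ unitaryGroup m R)
    (hB : B ∈ unitaryGroup m R) : fromBlocks A 0 0 B ∈ unitaryGroup (m ⊕ m) R := by
  simp only [mem_unitaryGroup_iff, star_eq_conjTranspose] at *
  simp [fromBlocks_conjTranspose, fromBlocks_multiply, hA, hB]

end Star

section L2OpNorm

open scoped Matrix.Norms.L2Operator

variable [Fintype m] [DecidableEq m] {𝕜 : Type*} [RCLike 𝕜]

theorem l2_opNorm_one_le : ‖(1 : Matrix m m 𝕜)‖ ≤ 1 := by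
  rw [cstar_norm_def, map_one]
  exact ContinuousLinearMap.norm_id_le

theorem l2_opNorm_fromRows_mul_fromCols_le (K : Matrix m m 𝕜) :
    ‖fromRows (1 : Matrix m m 𝕜) (-1 : Matrix m m 𝕜) * K
        * fromCols (1 : Matrix m m 𝕜) (-1 : Matrix m m 𝕜)‖ ≤ 2 * ‖K‖ := by
  set J := fromRows (1 : Matrix m m 𝕜) (-1 : Matrix m m 𝕜)
  have hJ : fromCols (1 : Matrix m m 𝕜) (-1 : Matrix m m 𝕜) = Jᴴ := by
    simp [J, conjTranspose_fromRows_eq_fromCols_conjTranspose]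
  have hJJ : ‖J‖ * ‖J‖ ≤ 2 := by
    rw [← l2_opNorm_conjTranspose_mul_self, ← hJ, fromCols_mul_fromRows, mul_one, neg_mul_neg,
      mul_one]
    linarith [norm_add_le (1 : Matrix m m 𝕜) 1, l2_opNorm_one_le (m := m) (𝕜 := 𝕜)]
  rw [hJ]
  calc ‖J * K * Jᴴ‖ ≤ ‖J‖ * ‖K‖ * ‖Jᴴ‖ :=
        (l2_opNorm_mul _ _).trans (mul_le_mul_of_nonneg_right (l2_opNorm_mul _ _) (norm_nonneg _))
    _ = ‖J‖ * ‖J‖ * ‖K‖ := by rw [l2_opNorm_conjTranspose]; ring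
    _ ≤ 2 * ‖K‖ := by gcongr

theorem opNorm_projSwap_conj_sub_le {P : Matrix m m ℂ} (hP : IsStarProjection P)
    (U : Matrix m m ℂ) :
    opNorm (projSwap P * fromBlocks U 0 0 U * projSwap P - fromBlocks U 0 0 U)
      ≤ 2 * opNorm (P * U - U * P) := by
  set W := projSwap P
  set D := fromBlocks U 0 0 U
  have hconj : W * D * W - D = W * (D * W - W * D) := by
    rw [mul_sub, ← mul_assoc, ← mul_assoc, projSwap_mul_self hP.isIdempotentElem, one_mul]
  change ‖W * D * W - D‖ ≤ 2 * ‖P * U - U * P‖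
  rw [hconj, CStarRing.norm_mem_unitary_mul _ (projSwap_mem_unitaryGroup hP),
    fromBlocks_mul_projSwap_sub_projSwap_mul_fromBlocks, norm_sub_rev]
  exact l2_opNorm_fromRows_mul_fromCols_le _

end L2OpNorm

end Matrix

theorem stmt10 {n d : ℕ}
    (U : Fin d → Matrix (Fin n) (Fin n) ℂ)
    (hU : ∀ i, U i ∈ Matrix.unitaryGroup (Fin n) ℂ)
    (hUcomm : ∀ i j, U i * U j = U j * U i)
    (P : Matrix (Fin n) (Fin n) ℂ) (hPsa : Pᴴ = P) (hPproj : P * P = P)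
    (ε : ℝ) (hPU : ∀ i, opNorm (P * U i - U i * P) ≤ ε) :
    ∃ V : Fin d → Matrix (Fin n ⊕ Fin n) (Fin n ⊕ Fin n) ℂ,
      (∀ i, V i ∈ Matrix.unitaryGroup (Fin n ⊕ Fin n) ℂ) ∧
      (∀ i j, V i * V j = V j * V i) ∧
      (∀ i, V i * Matrix.fromBlocks P 0 0 (1 - P)
            = Matrix.fromBlocks P 0 0 (1 - P) * V i) ∧
      (∀ i, opNorm (V i - Matrix.fromBlocks (U i) 0 0 (U i)) ≤ 4 * ε) := by
  have hP : IsStarProjection P := ⟨hPproj, hPsa⟩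
  have hW : P.projSwap * P.projSwap = 1 := Matrix.projSwap_mul_self hPproj
  refine ⟨fun i => P.projSwap * Matrix.fromBlocks (U i) 0 0 (U i) * P.projSwap,
    fun i => ?_, fun i j => ?_, fun i => ?_, fun i => ?_⟩
  · have hWU := Matrix.projSwap_mem_unitaryGroup hP
    exact mul_mem (mul_mem hWU (Matrix.fromBlocks_mem_unitaryGroup (hU i) (hU i))) hWU
  · exact (Matrix.commute_fromBlocks_diagonal (hUcomm i j) (hUcomm i j)).conj_of_mul_self_eq_one hW
  · rw [← Matrix.projSwap_mul_fromBlocks_one_zero_mul_projSwap hPproj]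
    exact (Matrix.commute_fromBlocks_diagonal (Commute.one_right (U i))
      (Commute.zero_right (U i))).conj_of_mul_self_eq_one hW
  · have hε : 0 ≤ ε := (norm_nonneg _).trans (hPU i)
    linarith [Matrix.opNorm_projSwap_conj_sub_le hP (U i), hPU i]
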